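/- For α > 0, r > 0, and h > 0, the double time integral over the singular diagonal block ∫_0^h ∫_0^t (4πα(t−τ))^{−3/2} exp(−r²/(4α(t−τ))) dτ dt equals h·(1/(4πα r)) − G^{dτdt}_α(r, h) + r/(8πα²), where G^{dτdt}_α(r,δ) := (1/(4π)) [ (r/(2α²) + δ/(α r)) erf(r/(2√(αδ))) + (√δ/√(πα³)) exp(−r²/(4αδ)) ]. -/

import Mathlib

/-!
Writing `s = t - τ`, the inner integral is `∫₀ᵗ K` for the heat kernel
`K(s) = (4παs)^{-3/2} exp(-r²/(4αs))`. By the chain rule `-G^{dτ}(r, ·)` is an antiderivative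
of `K`, and `G^{dτ}(r, s) → 1/(4παr)` as `s → 0⁺` since `erf x → 1` as `x → ∞`; hence the inner
integral is `1/(4παr) - G^{dτ}(r, t)`. Likewise `G^{dτdt}(r, ·)` is an antiderivative of
`G^{dτ}(r, ·)` with limit `r/(8πα²)` at `0⁺`. Both integrals are improper at `0`, so each step is
the fundamental theorem of calculus with a one-sided limit at the left endpoint.
-/

open Real Filter Set

noncomputable def erf (x : ℝ) : ℝ := (2 / Real.sqrt π) * ∫ t in (0:ℝ)..x, Real.exp (-t^2)

open MeasureTheory Topology

lemma hasDerivAt_erf (x : ℝ) : HasDerivAt erf (2 / √π * exp (-x ^ 2)) x := by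
  have hc : Continuous fun t : ℝ => exp (-t ^ 2) := by fun_prop
  exact (intervalIntegral.integral_hasDerivAt_right (hc.intervalIntegrable _ _)
    (hc.stronglyMeasurableAtFilter _ _) hc.continuousAt).const_mul _

lemma continuous_erf : Continuous erf :=
  continuous_iff_continuousAt.2 fun x => (hasDerivAt_erf x).continuousAt

lemma integrableOn_exp_neg_sq_Ioi : IntegrableOn (fun t : ℝ => exp (-t ^ 2)) (Ioi 0) := by
  simpa using (integrable_exp_neg_mul_sq one_pos).integrableOn (s := Ioi 0)

lemma integral_exp_neg_sq_Ioi : ∫ t in Ioi (0:ℝ), exp (-t ^ 2) = √π / 2 := by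
  simpa using integral_gaussian_Ioi 1

lemma tendsto_erf_atTop : Tendsto erf atTop (𝓝 1) := by
  have h := (intervalIntegral_tendsto_integral_Ioi 0 integrableOn_exp_neg_sq_Ioi
    tendsto_id).const_mul (2 / √π)
  rw [integral_exp_neg_sq_Ioi, div_mul_div_cancel₀ (by positivity), div_self two_ne_zero] at h
  exact h

lemma erf_nonneg {x : ℝ} (hx : 0 ≤ x) : 0 ≤ erf x :=
  mul_nonneg (by positivity) (intervalIntegral.integral_nonneg hx fun _ _ => (exp_pos _).le)

lemma erf_le_one {x : ℝ} (hx : 0 ≤ x) : erf x ≤ 1 := by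
  have hle : ∫ t in (0:ℝ)..x, exp (-t ^ 2) ≤ √π / 2 := by
    rw [intervalIntegral.integral_of_le hx, ← integral_exp_neg_sq_Ioi]
    exact setIntegral_mono_set integrableOn_exp_neg_sq_Ioi
      (Eventually.of_forall fun _ => (exp_pos _).le) Ioc_subset_Ioi_self.eventuallyLE
  calc erf x ≤ 2 / √π * (√π / 2) := mul_le_mul_of_nonneg_left hle (by positivity)
    _ = 1 := by field_simp

noncomputable def heatKernel (α r s : ℝ) : ℝ :=
  (4 * π * α * s) ^ (-(3:ℝ)/2) * exp (-r ^ 2 / (4 * α * s))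

noncomputable def Gdτ (α r δ : ℝ) : ℝ := 1 / (4 * π * α * r) * erf (r / (2 * √(α * δ)))

noncomputable def Gdτdt (α r δ : ℝ) : ℝ :=
  (1 / (4 * π)) * ((r / (2 * α ^ 2) + δ / (α * r)) * erf (r / (2 * √(α * δ)))
    + √δ / √(π * α ^ 3) * exp (-r ^ 2 / (4 * α * δ)))

section HeatKernel

variable {α r s : ℝ}

lemma rpow_neg_three_halves {x : ℝ} (hx : 0 < x) : x ^ (-(3:ℝ)/2) = (x * √x)⁻¹ := by
  rw [sqrt_eq_rpow, ← rpow_one_add' hx.le (by norm_num), ← rpow_neg hx.le]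
  norm_num

lemma tendsto_div_two_sqrt_mul_nhdsGT_zero (hα : 0 < α) (hr : 0 < r) :
    Tendsto (fun s => r / (2 * √(α * s))) (𝓝[>] 0) atTop := by
  have hsqrt : Tendsto (fun s => 2 * √(α * s)) (𝓝[>] 0) (𝓝[>] 0) := by
    refine tendsto_nhdsWithin_iff.2 ⟨?_, ?_⟩
    · exact ((by fun_prop : Continuous fun s => 2 * √(α * s)).tendsto' 0 0 (by simp)).mono_left
        nhdsWithin_le_nhds
    · filter_upwards [self_mem_nhdsWithin] with s (hs : 0 < s)
      exact mem_Ioi.2 (by positivity)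
  exact (tendsto_inv_nhdsGT_zero.comp hsqrt).const_mul_atTop hr

lemma hasDerivAt_div_two_sqrt_mul (hα : 0 < α) (hs : 0 < s) :
    HasDerivAt (fun s => r / (2 * √(α * s))) (-(r / (4 * s * √(α * s)))) s := by
  have hαs := mul_pos hα hs
  have h := (hasDerivAt_const s r).div
    ((((hasDerivAt_id' s).const_mul α).sqrt hαs.ne').const_mul 2) (by positivity)
  refine h.congr_deriv ?_
  have := sq_sqrt hαs.le
  field_simp
  linear_combination 4 * r * this

lemma hasDerivAt_erf_div_two_sqrt_mul (hα : 0 < α) (hs : 0 < s) :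
    HasDerivAt (fun s => erf (r / (2 * √(α * s))))
      (-(r / (2 * √π * s * √(α * s))) * exp (-r ^ 2 / (4 * α * s))) s := by
  refine ((hasDerivAt_erf _).comp s (hasDerivAt_div_two_sqrt_mul hα hs)).congr_deriv ?_
  have hsq : -(r / (2 * √(α * s))) ^ 2 = -r ^ 2 / (4 * α * s) := by
    rw [div_pow, mul_pow, sq_sqrt (mul_pos hα hs).le]
    ring
  rw [hsq]
  field_simp
  ring

lemma hasDerivAt_Gdτ (hα : 0 < α) (hr : r ≠ 0) (hs : 0 < s) :
    HasDerivAt (Gdτ α r) (-heatKernel α r s) s := by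
  refine ((hasDerivAt_erf_div_two_sqrt_mul hα hs).const_mul (1 / (4 * π * α * r))).congr_deriv ?_
  have hsqrt : √(4 * π * α * s) = 2 * √π * √(α * s) := by
    rw [show 4 * π * α * s = 2 ^ 2 * (π * (α * s)) by ring, sqrt_mul (by positivity),
      sqrt_sq zero_le_two, sqrt_mul pi_pos.le]
    ring
  rw [heatKernel, rpow_neg_three_halves (by positivity), hsqrt]
  field_simp

lemma tendsto_Gdτ_nhdsGT_zero (hα : 0 < α) (hr : 0 < r) :
    Tendsto (Gdτ α r) (𝓝[>] 0) (𝓝 (1 / (4 * π * α * r))) := by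
  have h := (tendsto_erf_atTop.comp (tendsto_div_two_sqrt_mul_nhdsGT_zero hα hr)).const_mul
    (1 / (4 * π * α * r))
  rwa [mul_one] at h

lemma tendsto_heatKernel_nhdsGT_zero (hα : 0 < α) (hr : r ≠ 0) :
    Tendsto (heatKernel α r) (𝓝[>] 0) (𝓝 0) := by
  have hb : 0 < r ^ 2 / (4 * α) := by positivity
  have h := ((tendsto_rpow_mul_exp_neg_mul_atTop_nhds_zero (3 / 2) _ hb).comp
    tendsto_inv_nhdsGT_zero).const_mul ((4 * π * α) ^ (-(3:ℝ)/2))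
  rw [mul_zero] at h
  refine h.congr' ?_
  filter_upwards [self_mem_nhdsWithin] with s (hs : 0 < s)
  rw [Function.comp_apply, heatKernel, mul_rpow (by positivity) hs.le, inv_rpow hs.le,
    ← rpow_neg hs.le, neg_div]
  field_simp

lemma continuousOn_heatKernel (hα : 0 < α) (hr : r ≠ 0) :
    ContinuousOn (heatKernel α r) (Ici 0) := by
  intro s hs
  rcases (mem_Ici.1 hs).eq_or_lt with rfl | hs
  · rw [← continuousWithinAt_Ioi_iff_Ici, ContinuousWithinAt]
    -- `0 ^ (-3/2) = 0` in Lean, which is also the limit from the right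
    simpa [heatKernel] using tendsto_heatKernel_nhdsGT_zero hα hr
  · refine ContinuousAt.continuousWithinAt ?_
    unfold heatKernel
    exact ((continuousAt_id.const_mul _).rpow_const (Or.inl (by positivity))).mul
      (continuousAt_const.div (by fun_prop) (by positivity)).rexp

lemma integral_heatKernel (hα : 0 < α) (hr : 0 < r) {t : ℝ} (ht : 0 < t) :
    ∫ s in (0:ℝ)..t, heatKernel α r s = 1 / (4 * π * α * r) - Gdτ α r t := by
  have hderiv (s) (hs : s ∈ Ioo 0 t) :
      HasDerivAt (fun s => -Gdτ α r s) (heatKernel α r s) s := by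
    have h := (hasDerivAt_Gdτ hα hr.ne' hs.1).neg
    rwa [neg_neg] at h
  rw [intervalIntegral.integral_eq_sub_of_hasDerivAt_of_tendsto ht hderiv
    (((continuousOn_heatKernel hα hr.ne').mono Icc_subset_Ici_self).intervalIntegrable_of_Icc
      ht.le)
    (tendsto_Gdτ_nhdsGT_zero hα hr).neg
    ((hasDerivAt_Gdτ hα hr.ne' ht).continuousAt.neg.tendsto.mono_left nhdsWithin_le_nhds)]
  simp only [Pi.neg_apply]
  ring

lemma integral_heatKernel_sub (hα : 0 < α) (hr : 0 < r) {t : ℝ} (ht : 0 < t) :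
    ∫ τ in (0:ℝ)..t, heatKernel α r (t - τ) = 1 / (4 * π * α * r) - Gdτ α r t := by
  simpa using integral_heatKernel hα hr ht

lemma hasDerivAt_Gdτdt (hα : 0 < α) (hr : r ≠ 0) (hs : 0 < s) :
    HasDerivAt (Gdτdt α r) (Gdτ α r s) s := by
  have hErf := (((hasDerivAt_id' s).div_const (α * r)).const_add (r / (2 * α ^ 2))).mul
    (hasDerivAt_erf_div_two_sqrt_mul (r := r) hα hs)
  have hExp := ((Real.hasDerivAt_sqrt hs.ne').div_const √(π * α ^ 3)).mul
    ((hasDerivAt_const s (-r ^ 2)).div ((hasDerivAt_id' s).const_mul (4 * α))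
      (by positivity)).exp
  refine ((hErf.add hExp).const_mul (1 / (4 * π))).congr_deriv ?_
  have hπα : √(π * α ^ 3) = α * √π * √α := by
    rw [show π * α ^ 3 = α ^ 2 * π * α by ring, sqrt_mul (by positivity),
      sqrt_mul (by positivity), sqrt_sq hα.le]
  rw [Gdτ, hπα, sqrt_mul hα.le]
  have hss := sq_sqrt hs.le
  simp only [Pi.div_apply, mul_one, zero_mul, zero_sub]
  set E := exp (-r ^ 2 / (4 * α * s))
  set e := erf (r / (2 * (√α * √s)))
  field_simp
  linear_combination 4 * r ^ 3 * E * hss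

lemma tendsto_Gdτdt_nhdsGT_zero (hα : 0 < α) (hr : 0 < r) :
    Tendsto (Gdτdt α r) (𝓝[>] 0) (𝓝 (r / (8 * π * α ^ 2))) := by
  have hErf := tendsto_erf_atTop.comp (tendsto_div_two_sqrt_mul_nhdsGT_zero hα hr)
  have hExp : Tendsto (fun s => exp (-r ^ 2 / (4 * α * s))) (𝓝[>] 0) (𝓝 0) := by
    refine tendsto_exp_atBot.comp ((tendsto_neg_atTop_atBot.comp
      (tendsto_inv_nhdsGT_zero.const_mul_atTop (by positivity : 0 < r ^ 2 / (4 * α)))).congr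
      fun s => ?_)
    simp only [Function.comp_apply]
    ring
  have hId : Tendsto (fun s : ℝ => s) (𝓝[>] 0) (𝓝 0) := nhdsWithin_le_nhds
  have hSqrt : Tendsto (√·) (𝓝[>] 0) (𝓝 0) := by
    simpa using continuous_sqrt.tendsto 0 |>.mono_left nhdsWithin_le_nhds
  have h := ((((hId.div_const (α * r)).const_add (r / (2 * α ^ 2))).mul hErf).add
    ((hSqrt.div_const √(π * α ^ 3)).mul hExp)).const_mul (1 / (4 * π))
  have hval : 1 / (4 * π) * ((r / (2 * α ^ 2) + 0 / (α * r)) * 1 + 0 / √(π * α ^ 3) * 0)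
      = r / (8 * π * α ^ 2) := by
    field_simp
    ring
  rw [hval] at h
  exact h

lemma intervalIntegrable_Gdτ (hα : 0 < α) (hr : 0 < r) (a b : ℝ) :
    IntervalIntegrable (Gdτ α r) volume a b := by
  refine (intervalIntegrable_const (c := 1 / (4 * π * α * r))).mono_fun' ?_
    (Eventually.of_forall fun s => ?_)
  · exact ((continuous_erf.measurable.comp (by fun_prop)).const_mul _).aestronglyMeasurable
  · have harg : 0 ≤ r / (2 * √(α * s)) := by positivity
    show ‖Gdτ α r s‖ ≤ 1 / (4 * π * α * r)
    rw [Gdτ, norm_of_nonneg (mul_nonneg (by positivity) (erf_nonneg harg))]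
    exact mul_le_of_le_one_right (by positivity) (erf_le_one harg)

lemma integral_Gdτ (hα : 0 < α) (hr : 0 < r) {h : ℝ} (hh : 0 < h) :
    ∫ t in (0:ℝ)..h, Gdτ α r t = Gdτdt α r h - r / (8 * π * α ^ 2) :=
  intervalIntegral.integral_eq_sub_of_hasDerivAt_of_tendsto hh
    (fun _ ht => hasDerivAt_Gdτdt hα hr.ne' ht.1) (intervalIntegrable_Gdτ hα hr _ _)
    (tendsto_Gdτdt_nhdsGT_zero hα hr)
    ((hasDerivAt_Gdτdt hα hr.ne' hh).continuousAt.tendsto.mono_left nhdsWithin_le_nhds)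

end HeatKernel

theorem stmt15 (α r h : ℝ) (hα : 0 < α) (hr : 0 < r) (hh : 0 < h) :
    ∫ t in (0:ℝ)..h,
        ∫ τ in (0:ℝ)..t,
          (4 * π * α * (t - τ)) ^ (-(3:ℝ)/2) * Real.exp (-r^2 / (4 * α * (t - τ)))
      = h * (1 / (4 * π * α * r))
        - (1 / (4 * π)) *
            ((r / (2 * α^2) + h / (α * r)) * erf (r / (2 * Real.sqrt (α * h)))
              + Real.sqrt h / Real.sqrt (π * α^3) * Real.exp (-r^2 / (4 * α * h)))
        + r / (8 * π * α^2) := by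
  have hInner : ∀ t ∈ uIoc 0 h,
      ∫ τ in (0:ℝ)..t, heatKernel α r (t - τ) = 1 / (4 * π * α * r) - Gdτ α r t :=
    fun t ht => integral_heatKernel_sub hα hr (uIoc_of_le hh.le ▸ ht).1
  calc _ = ∫ t in (0:ℝ)..h, (1 / (4 * π * α * r) - Gdτ α r t) :=
        intervalIntegral.integral_congr_ae (Eventually.of_forall hInner)
    _ = h * (1 / (4 * π * α * r)) - (Gdτdt α r h - r / (8 * π * α ^ 2)) := by
      rw [intervalIntegral.integral_sub intervalIntegrable_const
          (intervalIntegrable_Gdτ hα hr _ _),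
        intervalIntegral.integral_const, integral_Gdτ hα hr hh, sub_zero, smul_eq_mul]
    _ = _ := by
      rw [Gdτdt]
      ring
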